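/- arXiv:2410.20952 — 5 statements merged into one kernel-verified Lean document; each statement's English description precedes it below -/
import Mathlib

section
/- Let m ≥ 1, let θ ∈ ℝ satisfy |sin θ| ≠ |cos θ|, and let A₁, A₂ be m×m real matrices. Suppose that for k = 1, 2 we are given an m×m permutation matrix P_k, a unit lower triangular matrix L_k with |(L_k)_{ij}| < 1 for all i > j, and an upper triangular matrix U_k, such that P_k A_k = L_k U_k. Set e = 1 if |sin θ| > |cos θ| and e = 0 otherwise; set θ̂ = θ if e = 0 and θ̂ = π/2 − θ if e = 1; let P_θ be the 2×2 identity matrix if e = 0 and the 2×2 swap permutation matrix if e = 1. Define B = (R_θ ⊗ I_m)(A₁ ⊕ A₂), P = (P₁ ⊕ P₂)(P_θ ⊗ I_m), L = the 2×2 block matrix with blocks [L₁, 0; −tan(θ̂)·P₂P₁ᵀL₁, L₂], and U = the 2×2 block matrix with blocks [(−1)^e·cos(θ̂)·U₁, sin(θ̂)·L₁⁻¹P₁A₂; 0, (1/cos(θ̂))·U₂]. Then P·B = L·U, P is a permutation matrix, L is unit lower triangular with |L_{ij}| < 1 for all i > j, and U is upper triangular. -/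
/-!
Left multiplication by `P_θ` turns `R_θ` into `[[ε c, s], [-ε s, c]]` with `ε = (-1)^e`,
`c = cos θ̂`, `s = sin θ̂` and `|s| < |c|`. One step of block elimination on
`(P₁ ⊕ P₂)(P_θ R_θ ⊗ I)(A₁ ⊕ A₂)` with pivot block `ε c P₁A₁ = L₁ (ε c U₁)` then produces `L` and
`U`: the Schur complement is `(c + s²/c) P₂A₂ = c⁻¹ L₂U₂`. The multiplier block
`-tan θ̂ · P₂P₁ᵀL₁` has entries of modulus `< 1`, since the permutation only moves the entries of
`L₁`, all of modulus `≤ 1`, and `|tan θ̂| < 1`.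
-/

open Matrix

/-- `P` is a permutation matrix: `P i j = 1` if `i = e j` and `0` otherwise,
for some permutation `e` (so that `P • eₖ = e_{σ(k)}`). -/
def IsPermMatrix {ι : Type*} [DecidableEq ι] (P : Matrix ι ι ℝ) : Prop :=
  ∃ e : Equiv.Perm ι, ∀ i j, P i j = if i = e j then 1 else 0

/-- Linear index of `Fin m ⊕ Fin m`, listing the first block before the second. -/
def sumIdx {m : ℕ} : Fin m ⊕ Fin m → ℕ
  | Sum.inl i => (i : ℕ)
  | Sum.inr i => m + (i : ℕ)

section PermMatrix

variable {ι : Type*} [DecidableEq ι] {P Q : Matrix ι ι ℝ}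

theorem isPermMatrix_iff_exists_permMatrix :
    IsPermMatrix P ↔ ∃ σ : Equiv.Perm ι, σ.permMatrix ℝ = P := by
  refine ⟨fun ⟨e, he⟩ => ⟨e.symm, ?_⟩, fun ⟨σ, hσ⟩ => ⟨σ.symm, fun i j => ?_⟩⟩
  · ext i j
    simp [he, Equiv.eq_symm_apply, eq_comm]
  · simp [← hσ, Equiv.eq_symm_apply, eq_comm]

theorem isPermMatrix_permMatrix (σ : Equiv.Perm ι) : IsPermMatrix (σ.permMatrix ℝ) :=
  isPermMatrix_iff_exists_permMatrix.2 ⟨σ, rfl⟩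

theorem isPermMatrix_one : IsPermMatrix (1 : Matrix ι ι ℝ) := by
  simpa using isPermMatrix_permMatrix (1 : Equiv.Perm ι)

theorem IsPermMatrix.transpose (hP : IsPermMatrix P) : IsPermMatrix Pᵀ := by
  obtain ⟨σ, rfl⟩ := isPermMatrix_iff_exists_permMatrix.1 hP
  simpa using isPermMatrix_permMatrix σ⁻¹

variable [Fintype ι]

theorem IsPermMatrix.mul (hP : IsPermMatrix P) (hQ : IsPermMatrix Q) : IsPermMatrix (P * Q) := by
  obtain ⟨σ, rfl⟩ := isPermMatrix_iff_exists_permMatrix.1 hP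
  obtain ⟨τ, rfl⟩ := isPermMatrix_iff_exists_permMatrix.1 hQ
  simpa using isPermMatrix_permMatrix (τ * σ)

theorem IsPermMatrix.transpose_mul_self (hP : IsPermMatrix P) : Pᵀ * P = 1 := by
  obtain ⟨σ, rfl⟩ := isPermMatrix_iff_exists_permMatrix.1 hP
  rw [transpose_permMatrix, ← permMatrix_mul, mul_inv_cancel, permMatrix_one]

theorem IsPermMatrix.abs_mul_apply_le (hP : IsPermMatrix P) {M : Matrix ι ι ℝ} {c : ℝ}
    (hM : ∀ i j, |M i j| ≤ c) (i j : ι) : |(P * M) i j| ≤ c := by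
  obtain ⟨σ, rfl⟩ := isPermMatrix_iff_exists_permMatrix.1 hP
  rw [PEquiv.toMatrix_toPEquiv_mul]
  exact hM _ _

end PermMatrix

section BlockPermMatrix

variable {ι κ : Type*} [DecidableEq ι] [DecidableEq κ]

theorem IsPermMatrix.fromBlocks {P : Matrix ι ι ℝ} {Q : Matrix κ κ ℝ}
    (hP : IsPermMatrix P) (hQ : IsPermMatrix Q) : IsPermMatrix (fromBlocks P 0 0 Q) := by
  obtain ⟨σ, hσ⟩ := hP
  obtain ⟨τ, hτ⟩ := hQ
  exact ⟨σ.sumCongr τ, by rintro (i | i) (j | j) <;> simp [hσ, hτ]⟩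

theorem isPermMatrix_fromBlocks_swap :
    IsPermMatrix (fromBlocks 0 1 1 0 : Matrix (ι ⊕ ι) (ι ⊕ ι) ℝ) :=
  ⟨Equiv.sumComm ι ι, by rintro (i | i) (j | j) <;> simp [one_apply]⟩

end BlockPermMatrix

section UnitLowerTriangular

variable {ι : Type*} [LinearOrder ι] {L : Matrix ι ι ℝ}

theorem mul_inv_eq_one_of_unitLowerTriangular [Fintype ι] (hlow : L.IsLowerTriangular)
    (hdiag : ∀ i, L i i = 1) : L * L⁻¹ = 1 :=
  mul_nonsing_inv L (by simp [det_of_isLowerTriangular L hlow, hdiag])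

theorem abs_apply_le_one_of_unitLowerTriangular (hlow : L.IsLowerTriangular)
    (hdiag : ∀ i, L i i = 1) (hlt : ∀ i j, j < i → |L i j| < 1) (i j : ι) : |L i j| ≤ 1 := by
  rcases lt_trichotomy j i with h | rfl | h
  · exact (hlt i j h).le
  · simp [hdiag]
  · simp [hlow h]

end UnitLowerTriangular

theorem fromBlocks_apply_self_eq_one {ι κ : Type*} {A : Matrix ι ι ℝ} {B : Matrix ι κ ℝ}
    {C : Matrix κ ι ℝ} {D : Matrix κ κ ℝ} (hA : ∀ i, A i i = 1) (hD : ∀ i, D i i = 1) :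
    ∀ i, fromBlocks A B C D i i = 1
  | .inl i => hA i
  | .inr i => hD i

theorem Matrix.BlockTriangular.smul {ι α : Type*} [LT α] {M : Matrix ι ι ℝ} {b : ι → α}
    (hM : M.BlockTriangular b) (c : ℝ) : (c • M).BlockTriangular b :=
  fun _ _ h => by simp [hM h]

section SumIdx

variable {m : ℕ}

theorem blockTriangular_sumIdx_fromBlocks {U₁ U₂ B : Matrix (Fin m) (Fin m) ℝ}
    (h₁ : U₁.IsUpperTriangular) (h₂ : U₂.IsUpperTriangular) :
    (fromBlocks U₁ B 0 U₂).BlockTriangular sumIdx := by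
  rintro (i | i) (j | j) hij <;> simp only [sumIdx] at hij
  · exact h₁ hij
  · omega
  · rfl
  · exact h₂ (show j < i by omega)

theorem blockTriangular_toDual_sumIdx_fromBlocks {L₁ L₂ C : Matrix (Fin m) (Fin m) ℝ}
    (h₁ : L₁.IsLowerTriangular) (h₂ : L₂.IsLowerTriangular) :
    (fromBlocks L₁ 0 C L₂).BlockTriangular (OrderDual.toDual ∘ sumIdx) := by
  rintro (i | i) (j | j) hij <;>
    simp only [Function.comp_apply, OrderDual.toDual_lt_toDual, sumIdx] at hij
  · exact h₁ hij
  · rfl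
  · omega
  · exact h₂ (show i < j by omega)

theorem abs_fromBlocks_apply_lt_one {L₁ L₂ C : Matrix (Fin m) (Fin m) ℝ}
    (h₁ : ∀ i j, j < i → |L₁ i j| < 1) (h₂ : ∀ i j, j < i → |L₂ i j| < 1)
    (hC : ∀ i j, |C i j| < 1) (i j : Fin m ⊕ Fin m) (hij : sumIdx j < sumIdx i) :
    |fromBlocks L₁ 0 C L₂ i j| < 1 := by
  rcases i with i | i <;> rcases j with j | j <;> simp only [sumIdx] at hij
  · exact h₁ i j hij
  · omega
  · exact hC i j
  · exact h₂ i j (show j < i by omega)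

end SumIdx

theorem abs_neg_tan_smul_apply_lt_one {ι : Type*} {φ : ℝ} (hφ : |Real.sin φ| < |Real.cos φ|)
    {M : Matrix ι ι ℝ} (hM : ∀ i j, |M i j| ≤ 1) (i j : ι) : |(-Real.tan φ • M) i j| < 1 := by
  have htan : |Real.tan φ| < 1 := by
    rwa [Real.tan_eq_sin_div_cos, abs_div, div_lt_one ((abs_nonneg _).trans_lt hφ)]
  rw [Matrix.smul_apply, smul_eq_mul, abs_mul, abs_neg]
  calc |Real.tan φ| * |M i j| ≤ |Real.tan φ| := mul_le_of_le_one_right (abs_nonneg _) (hM i j)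
    _ < 1 := htan

theorem fromBlocks_rotation_factorization {ι : Type*} [Fintype ι] [DecidableEq ι]
    {φ : ℝ} (hφ : Real.cos φ ≠ 0) (ε : ℝ) {A₁ A₂ P₁ P₂ L₁ L₂ U₁ U₂ : Matrix ι ι ℝ}
    (hL₁ : L₁ * L₁⁻¹ = 1) (hP₁ : P₁ᵀ * P₁ = 1) (hA₁ : P₁ * A₁ = L₁ * U₁)
    (hA₂ : P₂ * A₂ = L₂ * U₂) :
    fromBlocks P₁ 0 0 P₂ *
        (fromBlocks ((ε * Real.cos φ) • 1) (Real.sin φ • 1) (-(ε * Real.sin φ) • 1)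
          (Real.cos φ • 1) * fromBlocks A₁ 0 0 A₂) =
      fromBlocks L₁ 0 (-Real.tan φ • (P₂ * P₁ᵀ * L₁)) L₂ *
        fromBlocks ((ε * Real.cos φ) • U₁) (Real.sin φ • (L₁⁻¹ * P₁ * A₂)) 0
          ((Real.cos φ)⁻¹ • U₂) := by
  have hL₁A₂ : L₁ * (L₁⁻¹ * P₁ * A₂) = P₁ * A₂ := by
    rw [Matrix.mul_assoc, ← Matrix.mul_assoc L₁, hL₁, Matrix.one_mul]
  have hP₂A₁ : P₂ * P₁ᵀ * L₁ * U₁ = P₂ * A₁ := by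
    rw [Matrix.mul_assoc, ← hA₁, ← Matrix.mul_assoc, Matrix.mul_assoc P₂, hP₁, Matrix.mul_one]
  have hP₂A₂ : P₂ * P₁ᵀ * L₁ * (L₁⁻¹ * P₁ * A₂) = P₂ * A₂ := by
    rw [Matrix.mul_assoc _ L₁, hL₁A₂, Matrix.mul_assoc, ← Matrix.mul_assoc P₁ᵀ, hP₁,
      Matrix.one_mul]
  simp only [fromBlocks_multiply, Matrix.smul_mul, Matrix.mul_smul, Matrix.one_mul,
    Matrix.mul_zero, Matrix.zero_mul, add_zero, zero_add, smul_zero, smul_smul, hA₁, hL₁A₂,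
    hP₂A₁, hP₂A₂, ← hA₂, ← add_smul]
  congr 2
  · rw [Real.tan_eq_sin_div_cos]
    field_simp
  · rw [Real.tan_eq_sin_div_cos]
    field_simp
    linear_combination Real.sin_sq_add_cos_sq φ

theorem gepp_butterfly_factorization_general
    (m : ℕ) (θ : ℝ) (hθ : |Real.sin θ| ≠ |Real.cos θ|)
    (A₁ A₂ P₁ P₂ L₁ L₂ U₁ U₂ : Matrix (Fin m) (Fin m) ℝ)
    (hP₁ : IsPermMatrix P₁) (hP₂ : IsPermMatrix P₂)
    (hL₁lower : ∀ i j : Fin m, (i : ℕ) < (j : ℕ) → L₁ i j = 0)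
    (hL₂lower : ∀ i j : Fin m, (i : ℕ) < (j : ℕ) → L₂ i j = 0)
    (hL₁diag : ∀ i, L₁ i i = 1) (hL₂diag : ∀ i, L₂ i i = 1)
    (hL₁lt : ∀ i j : Fin m, (j : ℕ) < (i : ℕ) → |L₁ i j| < 1)
    (hL₂lt : ∀ i j : Fin m, (j : ℕ) < (i : ℕ) → |L₂ i j| < 1)
    (hU₁ : ∀ i j : Fin m, (j : ℕ) < (i : ℕ) → U₁ i j = 0)
    (hU₂ : ∀ i j : Fin m, (j : ℕ) < (i : ℕ) → U₂ i j = 0)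
    (hA₁ : P₁ * A₁ = L₁ * U₁) (hA₂ : P₂ * A₂ = L₂ * U₂) :
    -- pivot indicator, pivoted angle, and 2×2 pivot permutation (⊗ I_m)
    let e : ℕ := if |Real.sin θ| > |Real.cos θ| then 1 else 0
    let θh : ℝ := if |Real.sin θ| > |Real.cos θ| then Real.pi / 2 - θ else θ
    let Pθ : Matrix (Fin m ⊕ Fin m) (Fin m ⊕ Fin m) ℝ :=
      if |Real.sin θ| > |Real.cos θ| then Matrix.fromBlocks 0 1 1 0
      else Matrix.fromBlocks 1 0 0 1
    -- B = (R_θ ⊗ I_m) (A₁ ⊕ A₂)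
    let B : Matrix (Fin m ⊕ Fin m) (Fin m ⊕ Fin m) ℝ :=
      Matrix.fromBlocks (Real.cos θ • (1 : Matrix (Fin m) (Fin m) ℝ))
          (Real.sin θ • (1 : Matrix (Fin m) (Fin m) ℝ))
          (-Real.sin θ • (1 : Matrix (Fin m) (Fin m) ℝ))
          (Real.cos θ • (1 : Matrix (Fin m) (Fin m) ℝ)) *
        Matrix.fromBlocks A₁ 0 0 A₂
    -- P = (P₁ ⊕ P₂)(P_θ ⊗ I_m)
    let P : Matrix (Fin m ⊕ Fin m) (Fin m ⊕ Fin m) ℝ :=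
      Matrix.fromBlocks P₁ 0 0 P₂ * Pθ
    -- L = [L₁, 0; −tan(θ̂)·P₂P₁ᵀL₁, L₂]
    let L : Matrix (Fin m ⊕ Fin m) (Fin m ⊕ Fin m) ℝ :=
      Matrix.fromBlocks L₁ 0 (-Real.tan θh • (P₂ * P₁ᵀ * L₁)) L₂
    -- U = [(−1)^e cos(θ̂)·U₁, sin(θ̂)·L₁⁻¹P₁A₂; 0, (1/cos θ̂)·U₂]
    let U : Matrix (Fin m ⊕ Fin m) (Fin m ⊕ Fin m) ℝ :=
      Matrix.fromBlocks (((-1 : ℝ) ^ e * Real.cos θh) • U₁)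
        (Real.sin θh • (L₁⁻¹ * P₁ * A₂)) 0 ((Real.cos θh)⁻¹ • U₂)
    P * B = L * U ∧
      IsPermMatrix P ∧
      (∀ i j, sumIdx i < sumIdx j → L i j = 0) ∧
      (∀ i, L i i = 1) ∧
      (∀ i j, sumIdx j < sumIdx i → |L i j| < 1) ∧
      (∀ i j, sumIdx j < sumIdx i → U i j = 0) := by
  intro e θh Pθ B P L U
  have hpiv : |Real.sin θh| < |Real.cos θh| := by
    by_cases hgt : |Real.sin θ| > |Real.cos θ|
    · simp only [θh, if_pos hgt, Real.sin_pi_div_two_sub, Real.cos_pi_div_two_sub]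
      exact hgt
    · simp only [θh, if_neg hgt]
      exact lt_of_le_of_ne (not_lt.mp hgt) hθ
  have hcos : Real.cos θh ≠ 0 := abs_pos.mp ((abs_nonneg _).trans_lt hpiv)
  have hrot : Pθ * fromBlocks (Real.cos θ • 1) (Real.sin θ • 1) (-Real.sin θ • 1) (Real.cos θ • 1)
      = fromBlocks (((-1) ^ e * Real.cos θh) • 1) (Real.sin θh • 1)
          (-((-1) ^ e * Real.sin θh) • 1) (Real.cos θh • 1) := by
    by_cases hgt : |Real.sin θ| > |Real.cos θ| <;>
      simp [Pθ, e, θh, hgt, fromBlocks_multiply, Real.sin_pi_div_two_sub, Real.cos_pi_div_two_sub]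
  have hPθ : IsPermMatrix Pθ := by
    by_cases hgt : |Real.sin θ| > |Real.cos θ|
    · simpa [Pθ, hgt] using isPermMatrix_fromBlocks_swap
    · simpa [Pθ, hgt] using isPermMatrix_one
  refine ⟨?_, (hP₁.fromBlocks hP₂).mul hPθ,
    blockTriangular_toDual_sumIdx_fromBlocks hL₁lower
      hL₂lower,
    fromBlocks_apply_self_eq_one hL₁diag hL₂diag,
    abs_fromBlocks_apply_lt_one hL₁lt hL₂lt (abs_neg_tan_smul_apply_lt_one hpiv
      ((hP₂.mul hP₁.transpose).abs_mul_apply_le (abs_apply_le_one_of_unitLowerTriangular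
        hL₁lower hL₁diag hL₁lt))),
    blockTriangular_sumIdx_fromBlocks (.smul hU₁ _)
      (.smul hU₂ _)⟩
  calc P * B = fromBlocks P₁ 0 0 P₂ * (Pθ * fromBlocks (Real.cos θ • 1) (Real.sin θ • 1)
        (-Real.sin θ • 1) (Real.cos θ • 1) * fromBlocks A₁ 0 0 A₂) := by
        simp only [P, B, Matrix.mul_assoc]
    _ = L * U := by
        rw [hrot]
        exact fromBlocks_rotation_factorization hcos _
          (mul_inv_eq_one_of_unitLowerTriangular hL₁lower hL₁diag)
          hP₁.transpose_mul_self hA₁ hA₂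

/-- GEPP factorization of a (nonsimple) butterfly-type matrix
`B = (R_θ ⊗ I_m)(A₁ ⊕ A₂)`, given GEPP factorizations `Pₖ Aₖ = Lₖ Uₖ`. -/
theorem gepp_butterfly_factorization
    (m : ℕ) (hm : 1 ≤ m) (θ : ℝ) (hθ : |Real.sin θ| ≠ |Real.cos θ|)
    (A₁ A₂ P₁ P₂ L₁ L₂ U₁ U₂ : Matrix (Fin m) (Fin m) ℝ)
    (hP₁ : IsPermMatrix P₁) (hP₂ : IsPermMatrix P₂)
    (hL₁lower : ∀ i j : Fin m, (i : ℕ) < (j : ℕ) → L₁ i j = 0)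
    (hL₂lower : ∀ i j : Fin m, (i : ℕ) < (j : ℕ) → L₂ i j = 0)
    (hL₁diag : ∀ i, L₁ i i = 1) (hL₂diag : ∀ i, L₂ i i = 1)
    (hL₁lt : ∀ i j : Fin m, (j : ℕ) < (i : ℕ) → |L₁ i j| < 1)
    (hL₂lt : ∀ i j : Fin m, (j : ℕ) < (i : ℕ) → |L₂ i j| < 1)
    (hU₁ : ∀ i j : Fin m, (j : ℕ) < (i : ℕ) → U₁ i j = 0)
    (hU₂ : ∀ i j : Fin m, (j : ℕ) < (i : ℕ) → U₂ i j = 0)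
    (hA₁ : P₁ * A₁ = L₁ * U₁) (hA₂ : P₂ * A₂ = L₂ * U₂) :
    -- pivot indicator, pivoted angle, and 2×2 pivot permutation (⊗ I_m)
    let e : ℕ := if |Real.sin θ| > |Real.cos θ| then 1 else 0
    let θh : ℝ := if |Real.sin θ| > |Real.cos θ| then Real.pi / 2 - θ else θ
    let Pθ : Matrix (Fin m ⊕ Fin m) (Fin m ⊕ Fin m) ℝ :=
      if |Real.sin θ| > |Real.cos θ| then Matrix.fromBlocks 0 1 1 0
      else Matrix.fromBlocks 1 0 0 1
    -- B = (R_θ ⊗ I_m) (A₁ ⊕ A₂)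
    let B : Matrix (Fin m ⊕ Fin m) (Fin m ⊕ Fin m) ℝ :=
      Matrix.fromBlocks (Real.cos θ • (1 : Matrix (Fin m) (Fin m) ℝ))
          (Real.sin θ • (1 : Matrix (Fin m) (Fin m) ℝ))
          (-Real.sin θ • (1 : Matrix (Fin m) (Fin m) ℝ))
          (Real.cos θ • (1 : Matrix (Fin m) (Fin m) ℝ)) *
        Matrix.fromBlocks A₁ 0 0 A₂
    -- P = (P₁ ⊕ P₂)(P_θ ⊗ I_m)
    let P : Matrix (Fin m ⊕ Fin m) (Fin m ⊕ Fin m) ℝ :=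
      Matrix.fromBlocks P₁ 0 0 P₂ * Pθ
    -- L = [L₁, 0; −tan(θ̂)·P₂P₁ᵀL₁, L₂]
    let L : Matrix (Fin m ⊕ Fin m) (Fin m ⊕ Fin m) ℝ :=
      Matrix.fromBlocks L₁ 0 (-Real.tan θh • (P₂ * P₁ᵀ * L₁)) L₂
    -- U = [(−1)^e cos(θ̂)·U₁, sin(θ̂)·L₁⁻¹P₁A₂; 0, (1/cos θ̂)·U₂]
    let U : Matrix (Fin m ⊕ Fin m) (Fin m ⊕ Fin m) ℝ :=
      Matrix.fromBlocks (((-1 : ℝ) ^ e * Real.cos θh) • U₁)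
        (Real.sin θh • (L₁⁻¹ * P₁ * A₂)) 0 ((Real.cos θh)⁻¹ • U₂)
    P * B = L * U ∧
      IsPermMatrix P ∧
      (∀ i j, sumIdx i < sumIdx j → L i j = 0) ∧
      (∀ i, L i i = 1) ∧
      (∀ i j, sumIdx j < sumIdx i → |L i j| < 1) ∧
      (∀ i j, sumIdx j < sumIdx i → U i j = 0) :=
  gepp_butterfly_factorization_general m θ hθ A₁ A₂ P₁ P₂ L₁ L₂ U₁ U₂ hP₁ hP₂ hL₁lower hL₂lower
    hL₁diag hL₂diag hL₁lt hL₂lt hU₁ hU₂ hA₁ hA₂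
end

section
/- Let p be a prime and n ≥ 1. The set B_n^{(p)} of nonsimple p-nary butterfly permutations is a subgroup of the symmetric group on p^n letters of cardinality p^{(p^n − 1)/(p − 1)}; since (p^n − 1)/(p − 1) equals the exponent of p in the prime factorization of (p^n)!, B_n^{(p)} is a Sylow p-subgroup of S_{p^n}. -/
/-- Kronecker product of permutations: `(i, r) ↦ (σ i, π r)` under the
row-major identification `Fin (a * b) ≃ Fin a × Fin b`. -/
def permKron {a b : ℕ} (σ : Equiv.Perm (Fin a)) (π : Equiv.Perm (Fin b)) :
    Equiv.Perm (Fin (a * b)) :=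
  finProdFinEquiv.symm.trans ((Equiv.prodCongr σ π).trans finProdFinEquiv)

/-- Direct (block) sum of permutations: `(i, r) ↦ (i, π i r)`. -/
def permBlockSum {a b : ℕ} (π : Fin a → Equiv.Perm (Fin b)) :
    Equiv.Perm (Fin (a * b)) :=
  finProdFinEquiv.symm.trans ((Equiv.prodCongrRight π).trans finProdFinEquiv)

/-- The simple `m`-nary butterfly permutations of `Fin (m ^ n)`:
Kronecker products `τ^{a₁} ⊗ ⋯ ⊗ τ^{aₙ}` of powers of the standard `m`-cycle `τ = finRotate m`. -/
def simpleButterfly (m : ℕ) : (n : ℕ) → Set (Equiv.Perm (Fin (m ^ n)))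
  | 0 => {1}
  | n + 1 =>
    {σ | ∃ (a : ℤ) (π : Equiv.Perm (Fin (m ^ n))), π ∈ simpleButterfly m n ∧
      σ = (finCongr (pow_succ' m n).symm).permCongr (permKron (finRotate m ^ a) π)}

/-- The nonsimple `m`-nary butterfly permutations of `Fin (m ^ n)`:
`B₀ = {1}`, `B_{n+1} = {(τ^a ⊗ id) ∘ (σ₁ ⊕ ⋯ ⊕ σ_m) : σᵢ ∈ B_n}`. -/
def nonsimpleButterfly (m : ℕ) : (n : ℕ) → Set (Equiv.Perm (Fin (m ^ n)))
  | 0 => {1}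
  | n + 1 =>
    {σ | ∃ (a : ℤ) (π : Fin m → Equiv.Perm (Fin (m ^ n))),
      (∀ i, π i ∈ nonsimpleButterfly m n) ∧
      σ = (finCongr (pow_succ' m n).symm).permCongr
        (permKron (finRotate m ^ a) 1 * permBlockSum π)}

/-- The length of the longest increasing subsequence of a permutation. -/
noncomputable def LIS {M : ℕ} (σ : Equiv.Perm (Fin M)) : ℕ :=
  sSup {k | ∃ t : Finset (Fin M), t.card = k ∧ StrictMonoOn (⇑σ) ↑t}

/-- The length of the longest decreasing subsequence of a permutation. -/
noncomputable def LDS {M : ℕ} (σ : Equiv.Perm (Fin M)) : ℕ :=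
  sSup {k | ∃ t : Finset (Fin M), t.card = k ∧ StrictAntiOn (⇑σ) ↑t}

/-- The number of cycles in the disjoint cycle decomposition of `σ`,
counting fixed points as cycles of length 1. -/
def numCycles {M : ℕ} (σ : Equiv.Perm (Fin M)) : ℕ :=
  Multiset.card σ.cycleType + (Finset.univ.filter fun x => σ x = x).card

/-- The number of fixed points of `σ`. -/
def numFixed {M : ℕ} (σ : Equiv.Perm (Fin M)) : ℕ :=
  (Finset.univ.filter fun x => σ x = x).card

/-!
`B_{n+1}` is the image of `⟨τ⟩ × B_nᵐ` under `(σ, π) ↦ (σ ⊗ id) ∘ (π₁ ⊕ ⋯ ⊕ πₘ)`. These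
permutations multiply as in the wreath product, `(σ, π)(σ', π') = (σσ', i ↦ π (σ' i) π' i)`,
so by induction each `B_n` is a subgroup; for `m ≠ 0` the map is injective, so
`|B_{n+1}| = m · |B_n|ᵐ`, i.e. `|B_n| = m ^ (1 + m + ⋯ + mⁿ⁻¹)`. For `m = p` this exponent is
the `p`-adic valuation of `(pⁿ)!` (Legendre), so `B_n` is a Sylow `p`-subgroup.
-/

open Equiv Function Set Subgroup

section PermWreath

variable {a b : ℕ}

def permWreath (σ : Perm (Fin a)) (π : Fin a → Perm (Fin b)) : Perm (Fin (a * b)) :=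
  permKron σ 1 * permBlockSum π

@[simp]
lemma permWreath_apply_finProdFinEquiv (σ : Perm (Fin a)) (π : Fin a → Perm (Fin b))
    (i : Fin a) (r : Fin b) :
    permWreath σ π (finProdFinEquiv (i, r)) = finProdFinEquiv (σ i, π i r) := by
  simp [permWreath, permKron, permBlockSum, Perm.mul_apply]

lemma permWreath_mul (σ σ' : Perm (Fin a)) (π π' : Fin a → Perm (Fin b)) :
    permWreath σ π * permWreath σ' π' = permWreath (σ * σ') (fun i => π (σ' i) * π' i) := by
  ext x
  obtain ⟨⟨i, r⟩, rfl⟩ := finProdFinEquiv.surjective x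
  simp [Perm.mul_apply]

lemma permWreath_one : permWreath (1 : Perm (Fin a)) (1 : Fin a → Perm (Fin b)) = 1 := by
  ext x
  obtain ⟨⟨i, r⟩, rfl⟩ := finProdFinEquiv.surjective x
  simp

lemma permWreath_inv (σ : Perm (Fin a)) (π : Fin a → Perm (Fin b)) :
    (permWreath σ π)⁻¹ = permWreath σ⁻¹ (fun i => (π (σ⁻¹ i))⁻¹) :=
  inv_eq_of_mul_eq_one_right <| by
    simp only [permWreath_mul, mul_inv_cancel]
    exact permWreath_one

lemma permWreath_injective [NeZero b] :
    Injective (uncurry (permWreath : Perm (Fin a) → (Fin a → Perm (Fin b)) → _)) := by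
  rintro ⟨σ, π⟩ ⟨σ', π'⟩ h
  have hpair (i : Fin a) (r : Fin b) : (σ i, π i r) = (σ' i, π' i r) := by
    simpa using congrArg (fun g : Perm (Fin (a * b)) => g (finProdFinEquiv (i, r))) h
  refine Prod.ext (Perm.ext fun i => (Prod.ext_iff.mp (hpair i 0)).1) ?_
  funext i
  exact Perm.ext fun r => (Prod.ext_iff.mp (hpair i r)).2

end PermWreath

lemma orderOf_finRotate {m : ℕ} (hm : m ≠ 0) : orderOf (finRotate m) = m := by
  rcases m with _ | _ | m
  · contradiction
  · exact orderOf_eq_one_iff.mpr finRotate_one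
  · rw [← Perm.lcm_cycleType, cycleType_finRotate]
    simp

section Butterfly

variable {m n : ℕ}

def butterflyStep (m n : ℕ) (σ : Perm (Fin m)) (π : Fin m → Perm (Fin (m ^ n))) :
    Perm (Fin (m ^ (n + 1))) :=
  (finCongr (pow_succ' m n).symm).permCongrHom (permWreath σ π)

lemma nonsimpleButterfly_succ :
    nonsimpleButterfly m (n + 1) =
      uncurry (butterflyStep m n) ''
        (zpowers (finRotate m) ×ˢ univ.pi fun _ => nonsimpleButterfly m n) := by
  ext σ
  simp [nonsimpleButterfly, butterflyStep, permWreath, mem_zpowers_iff, eq_comm]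

lemma butterflyStep_mul (σ σ' : Perm (Fin m)) (π π' : Fin m → Perm (Fin (m ^ n))) :
    butterflyStep m n σ π * butterflyStep m n σ' π' =
      butterflyStep m n (σ * σ') (fun i => π (σ' i) * π' i) := by
  rw [butterflyStep, butterflyStep, ← map_mul, permWreath_mul, butterflyStep]

lemma butterflyStep_one : butterflyStep m n 1 1 = 1 := by
  rw [butterflyStep, permWreath_one, map_one]

lemma butterflyStep_inv (σ : Perm (Fin m)) (π : Fin m → Perm (Fin (m ^ n))) :
    (butterflyStep m n σ π)⁻¹ = butterflyStep m n σ⁻¹ (fun i => (π (σ⁻¹ i))⁻¹) := by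
  rw [butterflyStep, butterflyStep, ← map_inv, permWreath_inv]

lemma butterflyStep_injective [NeZero m] : Injective (uncurry (butterflyStep m n)) :=
  (MulEquiv.injective _).comp permWreath_injective

variable (m) in
lemma one_mem_nonsimpleButterfly : ∀ n, (1 : Perm (Fin (m ^ n))) ∈ nonsimpleButterfly m n
  | 0 => rfl
  | n + 1 => by
    rw [nonsimpleButterfly_succ]
    exact ⟨(1, 1), ⟨one_mem _, fun _ _ => one_mem_nonsimpleButterfly n⟩, butterflyStep_one⟩

lemma mul_mem_nonsimpleButterfly : ∀ {n} {σ τ : Perm (Fin (m ^ n))},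
    σ ∈ nonsimpleButterfly m n → τ ∈ nonsimpleButterfly m n → σ * τ ∈ nonsimpleButterfly m n
  | 0, _, _, rfl, rfl => rfl
  | n + 1, _, _, hσ, hτ => by
    rw [nonsimpleButterfly_succ] at *
    obtain ⟨⟨g, π⟩, ⟨hg, hπ⟩, rfl⟩ := hσ
    obtain ⟨⟨g', π'⟩, ⟨hg', hπ'⟩, rfl⟩ := hτ
    refine ⟨(g * g', fun i => π (g' i) * π' i), ⟨mul_mem hg hg', fun i _ => ?_⟩,
      (butterflyStep_mul ..).symm⟩
    exact mul_mem_nonsimpleButterfly (hπ _ trivial) (hπ' i trivial)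

lemma inv_mem_nonsimpleButterfly : ∀ {n} {σ : Perm (Fin (m ^ n))},
    σ ∈ nonsimpleButterfly m n → σ⁻¹ ∈ nonsimpleButterfly m n
  | 0, _, rfl => rfl
  | n + 1, _, hσ => by
    rw [nonsimpleButterfly_succ] at *
    obtain ⟨⟨g, π⟩, ⟨hg, hπ⟩, rfl⟩ := hσ
    refine ⟨(g⁻¹, fun i => (π (g⁻¹ i))⁻¹),
      ⟨inv_mem hg, fun _ _ => inv_mem_nonsimpleButterfly (hπ _ trivial)⟩,
      (butterflyStep_inv ..).symm⟩

variable (m n) in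
def nonsimpleButterflySubgroup : Subgroup (Perm (Fin (m ^ n))) where
  carrier := nonsimpleButterfly m n
  one_mem' := one_mem_nonsimpleButterfly m n
  mul_mem' := mul_mem_nonsimpleButterfly
  inv_mem' := inv_mem_nonsimpleButterfly

theorem card_nonsimpleButterfly (hm : m ≠ 0) :
    ∀ n, Nat.card (nonsimpleButterfly m n) = m ^ ∑ j ∈ Finset.range n, m ^ j
  | 0 => by
    simp only [nonsimpleButterfly, Nat.card_coe_set_eq, Set.ncard_singleton, Finset.range_zero,
      Finset.sum_empty, pow_zero]
  | n + 1 => by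
    have : NeZero m := ⟨hm⟩
    rw [nonsimpleButterfly_succ, Nat.card_image_of_injective butterflyStep_injective,
      Nat.card_congr (Equiv.Set.prod _ _), Nat.card_prod, SetLike.coe_sort_coe, Nat.card_zpowers,
      orderOf_finRotate hm, Nat.card_congr (Equiv.Set.univPi _), Nat.card_pi,
      card_nonsimpleButterfly hm n, Finset.prod_const, Finset.card_univ, Fintype.card_fin,
      geom_sum_succ, pow_succ, pow_mul', mul_comm]

end Butterfly

theorem Nat.factorization_factorial_prime_pow {p : ℕ} (hp : p.Prime) (n : ℕ) :
    (p ^ n).factorial.factorization p = ∑ i ∈ Finset.range n, p ^ i := by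
  rw [← multiplicity_eq_factorization hp (factorial_ne_zero _), hp.multiplicity_factorial_pow]

theorem nonsimpleButterfly_is_sylow_general (p n : ℕ) (hp : p.Prime) :
    ∃ H : Subgroup (Equiv.Perm (Fin (p ^ n))),
      (H : Set (Equiv.Perm (Fin (p ^ n)))) = nonsimpleButterfly p n ∧
      Nat.card H = p ^ ((p ^ n - 1) / (p - 1)) ∧
      (p ^ n - 1) / (p - 1) = (Nat.factorial (p ^ n)).factorization p ∧
      ∃ S : Sylow p (Equiv.Perm (Fin (p ^ n))),
        (S : Subgroup (Equiv.Perm (Fin (p ^ n)))) = H := by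
  have : Fact p.Prime := ⟨hp⟩
  have hgeom : ∑ j ∈ Finset.range n, p ^ j = (p ^ n - 1) / (p - 1) := Nat.geomSum_eq hp.two_le n
  have hcard : Nat.card (nonsimpleButterflySubgroup p n) = p ^ ((p ^ n - 1) / (p - 1)) :=
    hgeom ▸ card_nonsimpleButterfly hp.ne_zero n
  have hexp : (p ^ n - 1) / (p - 1) = (p ^ n).factorial.factorization p := by
    rw [← hgeom, Nat.factorization_factorial_prime_pow hp]
  refine ⟨_, rfl, hcard, hexp, Sylow.ofCard (nonsimpleButterflySubgroup p n) ?_, rfl⟩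
  rw [hcard, Nat.card_perm, Nat.card_fin, hexp]

/-- The nonsimple `p`-nary butterfly permutations form a subgroup of `S_{p^n}` of
cardinality `p^{(pⁿ−1)/(p−1)}`; since `(pⁿ−1)/(p−1)` is the exponent of `p` in `(pⁿ)!`,
this subgroup is a Sylow `p`-subgroup of `S_{p^n}`. -/
theorem nonsimpleButterfly_is_sylow (p n : ℕ) (hp : p.Prime) (hn : 1 ≤ n) :
    ∃ H : Subgroup (Equiv.Perm (Fin (p ^ n))),
      (H : Set (Equiv.Perm (Fin (p ^ n)))) = nonsimpleButterfly p n ∧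
      Nat.card H = p ^ ((p ^ n - 1) / (p - 1)) ∧
      (p ^ n - 1) / (p - 1) = (Nat.factorial (p ^ n)).factorization p ∧
      ∃ S : Sylow p (Equiv.Perm (Fin (p ^ n))),
        (S : Subgroup (Equiv.Perm (Fin (p ^ n)))) = H :=
  nonsimpleButterfly_is_sylow_general p n hp
end

section
/- Let N = 2^n with n ≥ 0. For every σ in the simple binary butterfly group B_{s,N}, L(σ) is a power of 2, and for each 0 ≤ k ≤ n the number of σ ∈ B_{s,N} with L(σ) = 2^k equals the binomial coefficient C(n,k). Equivalently, for σ drawn uniformly from B_{s,N}, log₂ L(σ) has the Binomial(n, 1/2) distribution. -/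
/-!
Under the order isomorphism `Fin a ×ₗ Fin b ≃ Fin (a * b)`, the Kronecker product `σ ⊗ π` becomes
the map `(i, r) ↦ (σ i, π r)` of the lexicographic product. A product of increasing subsequences of
`σ` and of `π` is increasing for it; conversely, an increasing subsequence of it projects onto an
increasing subsequence of `σ`, and each fibre of the projection is increasing for `π`. Hence
`L(σ ⊗ π) = L(σ) L(π)`. Every element of `B_{s,2^(n+1)}` is `ρ ⊗ π` for a unique `ρ ∈ {id, τ₂}` and
`π ∈ B_{s,2^n}`, and `L(id) = 2`, `L(τ₂) = 1`, so the number of elements with `L = 2^k` satisfies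
Pascal's rule.
-/

open Finset Function Equiv

section LongestIncreasing

variable {α β : Type*} [Preorder α] [Preorder β] {f : α → β}

/-- `LIS` for maps between arbitrary preorders, such as lexicographic products;
`LIS σ` is definitionally `lisLength σ`. -/
noncomputable def lisLength (f : α → β) : ℕ :=
  sSup {k | ∃ t : Finset α, #t = k ∧ StrictMonoOn f t}

theorem bddAbove_setOf_card_strictMonoOn [Fintype α] (f : α → β) :
    BddAbove {k | ∃ t : Finset α, #t = k ∧ StrictMonoOn f t} :=
  ⟨Fintype.card α, fun _ ⟨t, ht, _⟩ => ht ▸ t.card_le_univ⟩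

theorem nonempty_setOf_card_strictMonoOn (f : α → β) :
    {k | ∃ t : Finset α, #t = k ∧ StrictMonoOn f t}.Nonempty :=
  ⟨0, ∅, rfl, by simp [StrictMonoOn]⟩

theorem card_le_lisLength [Fintype α] {t : Finset α} (ht : StrictMonoOn f t) :
    #t ≤ lisLength f :=
  le_csSup (bddAbove_setOf_card_strictMonoOn f) ⟨t, rfl, ht⟩

theorem lisLength_le {n : ℕ} (h : ∀ t : Finset α, StrictMonoOn f t → #t ≤ n) :
    lisLength f ≤ n :=
  csSup_le (nonempty_setOf_card_strictMonoOn f) fun _ ⟨t, ht, hf⟩ => ht ▸ h t hf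

theorem exists_strictMonoOn_card_eq_lisLength [Fintype α] (f : α → β) :
    ∃ t : Finset α, StrictMonoOn f t ∧ #t = lisLength f :=
  let ⟨t, ht, hf⟩ :=
    Nat.sSup_mem (nonempty_setOf_card_strictMonoOn f) (bddAbove_setOf_card_strictMonoOn f)
  ⟨t, hf, ht⟩

theorem lisLength_of_strictMono [Fintype α] (hf : StrictMono f) : lisLength f = Fintype.card α :=
  le_antisymm (lisLength_le fun t _ => t.card_le_univ)
    (card_univ (α := α) ▸ card_le_lisLength (hf.strictMonoOn _))

end LongestIncreasing

section LinearOrder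

variable {α α' β β' : Type*}

theorem lisLength_of_strictAnti [Fintype α] [LinearOrder α] [Nonempty α] [Preorder β] {f : α → β}
    (hf : StrictAnti f) : lisLength f = 1 := by
  refine le_antisymm (lisLength_le fun t ht => card_le_one.2 fun x hx y hy => ?_) ?_
  · by_contra hxy
    rcases lt_or_gt_of_ne hxy with h | h
    · exact (ht hx hy h).not_gt (hf h)
    · exact (ht hy hx h).not_gt (hf h)
  · obtain ⟨x⟩ := ‹Nonempty α›
    simpa using card_le_lisLength (f := f) (t := {x}) (by simp)

theorem lisLength_comp_le [Fintype α] [Preorder α] [LinearOrder α'] [Preorder β] {f : α → β}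
    {e : α' → α} (he : StrictMono e) : lisLength (f ∘ e) ≤ lisLength f := by
  refine lisLength_le fun t ht => ?_
  rw [← card_map ⟨e, he.injective⟩]
  refine card_le_lisLength ?_
  rw [coe_map]
  rintro _ ⟨a, ha, rfl⟩ _ ⟨b, hb, rfl⟩ hab
  exact ht ha hb (he.lt_iff_lt.1 hab)

theorem lisLength_strictMono_comp [Preorder α] [LinearOrder β] [Preorder β'] {f : α → β}
    {g : β → β'} (hg : StrictMono g) : lisLength (g ∘ f) = lisLength f := by
  simp only [lisLength, StrictMonoOn, Function.comp_apply, hg.lt_iff_lt]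

theorem lisLength_conj [Fintype α] [LinearOrder α] [Fintype α'] [LinearOrder α'] [LinearOrder β]
    [Preorder β'] (f : α → β) (e : α ≃ α') (he : StrictMono e) {g : β → β'} (hg : StrictMono g) :
    lisLength (g ∘ f ∘ e.symm) = lisLength f := by
  have he' : StrictMono e.symm := fun x y hxy => he.lt_iff_lt.1 (by simpa using hxy)
  rw [lisLength_strictMono_comp hg]
  refine le_antisymm (lisLength_comp_le he') ?_
  simpa [Function.comp_def] using lisLength_comp_le (f := f ∘ e.symm) he

end LinearOrder

section LexProd

variable {α β α' β' : Type*} [Preorder α] [Preorder β] [Preorder α'] [Preorder β']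

def lexMap (f : α → α') (g : β → β') (p : α ×ₗ β) : α' ×ₗ β' :=
  toLex (f (ofLex p).1, g (ofLex p).2)

variable [Fintype α] [Fintype β] {f : α → α'} {g : β → β'}

theorem mul_lisLength_le_lisLength_lexMap :
    lisLength f * lisLength g ≤ lisLength (lexMap f g) := by
  obtain ⟨s, hs, hs_card⟩ := exists_strictMonoOn_card_eq_lisLength f
  obtain ⟨u, hu, hu_card⟩ := exists_strictMonoOn_card_eq_lisLength g
  rw [← hs_card, ← hu_card, ← card_product, ← card_map toLex.toEmbedding]
  refine card_le_lisLength ?_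
  simp only [coe_map, coe_product]
  rintro _ ⟨⟨i, r⟩, ⟨hi, hr⟩, rfl⟩ _ ⟨⟨i', r'⟩, ⟨hi', hr'⟩, rfl⟩ hlt
  rcases Prod.Lex.toLex_lt_toLex.1 hlt with hii' | ⟨rfl, hrr'⟩
  · exact Prod.Lex.toLex_lt_toLex.2 (Or.inl (hs hi hi' hii'))
  · exact Prod.Lex.toLex_lt_toLex.2 (Or.inr ⟨rfl, hu hr hr' hrr'⟩)

theorem lisLength_lexMap_le (hf : Injective f) :
    lisLength (lexMap f g) ≤ lisLength f * lisLength g := by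
  classical
  refine lisLength_le fun T hT => ?_
  have hfst : StrictMonoOn f (T.image fun p => (ofLex p).1) := by
    simp only [coe_image]
    rintro _ ⟨p, hp, rfl⟩ _ ⟨q, hq, rfl⟩ hpq
    rcases Prod.Lex.lt_iff.1 (hT hp hq (Prod.Lex.lt_iff.2 (Or.inl hpq))) with h | ⟨h, -⟩
    · exact h
    · exact absurd (hf h) hpq.ne
  have hfiber : ∀ i, #{p ∈ T | (ofLex p).1 = i} ≤ lisLength g := by
    intro i
    rw [← card_image_of_injOn (f := fun p => (ofLex p).2) ?_]
    · refine card_le_lisLength ?_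
      simp only [coe_image, coe_filter]
      rintro _ ⟨p, ⟨hp, rfl⟩, rfl⟩ _ ⟨q, ⟨hq, hpq₁⟩, rfl⟩ hpq₂
      have hpq : p < q := Prod.Lex.lt_iff.2 (Or.inr ⟨hpq₁.symm, hpq₂⟩)
      rcases Prod.Lex.lt_iff.1 (hT hp hq hpq) with h | ⟨-, h⟩
      · exact absurd h (by simp [lexMap, hpq₁])
      · exact h
    · intro p hp q hq hpq
      rw [mem_coe, mem_filter] at hp hq
      exact ofLex.injective (Prod.ext (hp.2.trans hq.2.symm) hpq)
  calc #T ≤ lisLength g * #(T.image fun p => (ofLex p).1) :=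
        card_le_mul_card_image T _ fun i _ => hfiber i
    _ ≤ lisLength g * lisLength f := Nat.mul_le_mul_left _ (card_le_lisLength hfst)
    _ = lisLength f * lisLength g := Nat.mul_comm _ _

theorem lisLength_lexMap (hf : Injective f) :
    lisLength (lexMap f g) = lisLength f * lisLength g :=
  le_antisymm (lisLength_lexMap_le hf) mul_lisLength_le_lisLength_lexMap

end LexProd

section Kronecker

variable {a b : ℕ}

theorem strictMono_finProdFinEquiv_ofLex :
    StrictMono fun p : Fin a ×ₗ Fin b => finProdFinEquiv (ofLex p) := by
  intro p q h
  rw [Fin.lt_def, finProdFinEquiv_apply_val, finProdFinEquiv_apply_val]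
  rcases Prod.Lex.lt_iff.1 h with h | ⟨h₁, h₂⟩
  · have hb : b * (ofLex p).1 + b ≤ b * (ofLex q).1 := Nat.mul_le_mul_left b (Fin.lt_def.1 h)
    linarith [(ofLex p).2.isLt]
  · rw [h₁]
    exact Nat.add_lt_add_right h₂ _

theorem LIS_permKron (σ : Perm (Fin a)) (π : Perm (Fin b)) :
    LIS (permKron σ π) = LIS σ * LIS π :=
  (lisLength_conj (lexMap σ π) (ofLex.trans finProdFinEquiv) strictMono_finProdFinEquiv_ofLex
    strictMono_finProdFinEquiv_ofLex).trans (lisLength_lexMap σ.injective)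

theorem LIS_finCongr_permCongr {M M' : ℕ} (h : M = M') (σ : Perm (Fin M)) :
    LIS ((finCongr h).permCongr σ) = LIS σ :=
  lisLength_conj σ (finCongr h) (Fin.castOrderIso h).strictMono (Fin.castOrderIso h).strictMono

theorem permKron_apply_finProdFinEquiv (σ : Perm (Fin a)) (π : Perm (Fin b)) (i : Fin a)
    (r : Fin b) : permKron σ π (finProdFinEquiv (i, r)) = finProdFinEquiv (σ i, π r) := by
  simp [permKron]

theorem permKron_inj [NeZero a] [NeZero b] {σ σ' : Perm (Fin a)} {π π' : Perm (Fin b)} :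
    permKron σ π = permKron σ' π' ↔ σ = σ' ∧ π = π' := by
  refine ⟨fun h => ?_, fun ⟨hσ, hπ⟩ => hσ ▸ hπ ▸ rfl⟩
  have hpair (i : Fin a) (r : Fin b) : (σ i, π r) = (σ' i, π' r) := by
    apply finProdFinEquiv.injective
    rw [← permKron_apply_finProdFinEquiv, h, permKron_apply_finProdFinEquiv]
  exact ⟨Equiv.ext fun i => congrArg Prod.fst (hpair i 0),
    Equiv.ext fun r => congrArg Prod.snd (hpair 0 r)⟩

end Kronecker

theorem LIS_one {M : ℕ} : LIS (1 : Perm (Fin M)) = M :=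
  (lisLength_of_strictMono fun _ _ h => h).trans (Fintype.card_fin M)

theorem LIS_finRotate_two : LIS (finRotate 2) = 1 :=
  lisLength_of_strictAnti (by decide)

theorem Equiv.Perm.eq_one_or_eq_finRotate_two (ρ : Perm (Fin 2)) : ρ = 1 ∨ ρ = finRotate 2 := by
  revert ρ
  decide

section Butterfly

variable {m n : ℕ}

def butterflySucc (ρ : Perm (Fin m)) (π : Perm (Fin (m ^ n))) : Perm (Fin (m ^ (n + 1))) :=
  (finCongr (pow_succ' m n).symm).permCongr (permKron ρ π)

theorem LIS_butterflySucc (ρ : Perm (Fin m)) (π : Perm (Fin (m ^ n))) :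
    LIS (butterflySucc ρ π) = LIS ρ * LIS π :=
  (LIS_finCongr_permCongr _ _).trans (LIS_permKron ρ π)

theorem butterflySucc_inj [NeZero m] {ρ ρ' : Perm (Fin m)} {π π' : Perm (Fin (m ^ n))} :
    butterflySucc ρ π = butterflySucc ρ' π' ↔ ρ = ρ' ∧ π = π' :=
  (Equiv.injective _).eq_iff.trans permKron_inj

theorem setOf_mem_simpleButterfly_zero_LIS_eq (L : ℕ) :
    {σ | σ ∈ simpleButterfly m 0 ∧ LIS σ = L} = {σ | σ = 1 ∧ 1 = L} := by
  ext σ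
  exact and_congr_right fun (h : σ = 1) => by rw [h, LIS_one, pow_zero]

theorem mem_simpleButterfly_two_succ {σ : Perm (Fin (2 ^ (n + 1)))} :
    σ ∈ simpleButterfly 2 (n + 1) ↔
      ∃ π ∈ simpleButterfly 2 n, σ = butterflySucc 1 π ∨ σ = butterflySucc (finRotate 2) π := by
  constructor
  · rintro ⟨a, π, hπ, rfl⟩
    exact ⟨π, hπ, (finRotate 2 ^ a).eq_one_or_eq_finRotate_two.imp (congrArg (butterflySucc · π))
      (congrArg (butterflySucc · π))⟩
  · rintro ⟨π, hπ, rfl | rfl⟩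
    · exact ⟨0, π, hπ, by rw [zpow_zero]; rfl⟩
    · exact ⟨1, π, hπ, by rw [zpow_one]; rfl⟩

end Butterfly

section BinaryButterfly

variable {n : ℕ}

theorem LIS_butterflySucc_one (π : Perm (Fin (2 ^ n))) :
    LIS (butterflySucc 1 π) = 2 * LIS π := by
  rw [LIS_butterflySucc, LIS_one]

theorem LIS_butterflySucc_finRotate_two (π : Perm (Fin (2 ^ n))) :
    LIS (butterflySucc (finRotate 2) π) = LIS π := by
  rw [LIS_butterflySucc, LIS_finRotate_two, one_mul]

theorem exists_LIS_eq_two_pow_of_mem_simpleButterfly :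
    ∀ {n : ℕ} {σ : Perm (Fin (2 ^ n))}, σ ∈ simpleButterfly 2 n → ∃ k ≤ n, LIS σ = 2 ^ k
  | 0, _, rfl => ⟨0, le_rfl, LIS_one⟩
  | n + 1, _, hσ => by
    obtain ⟨π, hπ, rfl | rfl⟩ := mem_simpleButterfly_two_succ.1 hσ <;>
      obtain ⟨k, hk, hπk⟩ := exists_LIS_eq_two_pow_of_mem_simpleButterfly hπ
    · exact ⟨k + 1, by omega, by rw [LIS_butterflySucc_one, hπk, pow_succ']⟩
    · exact ⟨k, by omega, by rw [LIS_butterflySucc_finRotate_two, hπk]⟩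

theorem setOf_mem_simpleButterfly_two_succ_LIS_eq (L : ℕ) :
    {σ | σ ∈ simpleButterfly 2 (n + 1) ∧ LIS σ = L} =
      butterflySucc 1 '' {π | π ∈ simpleButterfly 2 n ∧ 2 * LIS π = L} ∪
        butterflySucc (finRotate 2) '' {π | π ∈ simpleButterfly 2 n ∧ LIS π = L} := by
  ext σ
  simp only [Set.mem_union, Set.mem_image, mem_simpleButterfly_two_succ]
  constructor
  · rintro ⟨⟨π, hπ, rfl | rfl⟩, rfl⟩
    · exact Or.inl ⟨π, ⟨hπ, (LIS_butterflySucc_one π).symm⟩, rfl⟩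
    · exact Or.inr ⟨π, ⟨hπ, (LIS_butterflySucc_finRotate_two π).symm⟩, rfl⟩
  · rintro (⟨π, ⟨hπ, rfl⟩, rfl⟩ | ⟨π, ⟨hπ, rfl⟩, rfl⟩)
    · exact ⟨⟨π, hπ, Or.inl rfl⟩, LIS_butterflySucc_one π⟩
    · exact ⟨⟨π, hπ, Or.inr rfl⟩, LIS_butterflySucc_finRotate_two π⟩

theorem ncard_simpleButterfly_two_succ_LIS_eq (L : ℕ) :
    {σ | σ ∈ simpleButterfly 2 (n + 1) ∧ LIS σ = L}.ncard =
      {π | π ∈ simpleButterfly 2 n ∧ 2 * LIS π = L}.ncard +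
        {π | π ∈ simpleButterfly 2 n ∧ LIS π = L}.ncard := by
  have hdisj : Disjoint (butterflySucc 1 '' {π | π ∈ simpleButterfly 2 n ∧ 2 * LIS π = L})
      (butterflySucc (finRotate 2) '' {π | π ∈ simpleButterfly 2 n ∧ LIS π = L}) := by
    refine Set.disjoint_left.2 ?_
    rintro _ ⟨π, -, rfl⟩ ⟨π', -, h⟩
    exact absurd (butterflySucc_inj.1 h).1 (by decide)
  rw [setOf_mem_simpleButterfly_two_succ_LIS_eq, Set.ncard_union_eq hdisj,
    Set.ncard_image_of_injective _ fun _ _ h => (butterflySucc_inj.1 h).2,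
    Set.ncard_image_of_injective _ fun _ _ h => (butterflySucc_inj.1 h).2]

theorem ncard_simpleButterfly_two_LIS_eq_two_pow :
    ∀ n k : ℕ, {σ | σ ∈ simpleButterfly 2 n ∧ LIS σ = 2 ^ k}.ncard = n.choose k
  | 0, k => by
    rw [setOf_mem_simpleButterfly_zero_LIS_eq]
    rcases k with _ | k
    · simp
    · simp [(Nat.one_lt_two_pow k.succ_ne_zero).ne]
  | n + 1, 0 => by
    rw [ncard_simpleButterfly_two_succ_LIS_eq, ncard_simpleButterfly_two_LIS_eq_two_pow n 0]
    simp
  | n + 1, k + 1 => by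
    have hset : {π | π ∈ simpleButterfly 2 n ∧ 2 * LIS π = 2 ^ (k + 1)} =
        {π | π ∈ simpleButterfly 2 n ∧ LIS π = 2 ^ k} := by
      simp [pow_succ']
    rw [ncard_simpleButterfly_two_succ_LIS_eq, hset, ncard_simpleButterfly_two_LIS_eq_two_pow n k,
      ncard_simpleButterfly_two_LIS_eq_two_pow n (k + 1), Nat.choose_succ_succ]

end BinaryButterfly

/-- For the simple binary butterfly group `B_{s,2^n}`: every element has LIS a power
of 2, and the number of elements with `L(σ) = 2^k` is `C(n,k)`; i.e. `log₂ L(σ)` is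
`Binom(n, 1/2)` for `σ` uniform on `B_{s,2^n}`. -/
theorem simpleButterfly_LIS_binomial (n : ℕ) :
    (∀ σ ∈ simpleButterfly 2 n, ∃ k, k ≤ n ∧ LIS σ = 2 ^ k) ∧
    (∀ k, k ≤ n →
      {σ | σ ∈ simpleButterfly 2 n ∧ LIS σ = 2 ^ k}.ncard = n.choose k) :=
  ⟨fun _ => exists_LIS_eq_two_pow_of_mem_simpleButterfly,
    fun k _ => ncard_simpleButterfly_two_LIS_eq_two_pow n k⟩
end

section
/- For every n ≥ 0 and every σ in the simple binary butterfly group B_{s,2^n}, the lengths of the longest increasing and longest decreasing subsequences satisfy L(σ)·D(σ) = 2^n. -/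
section ButterflyAux

variable {b : ℕ}

/-- embed block `i`, position `r` -/
def emb (i : Fin 2) (r : Fin b) : Fin (2 * b) := finProdFinEquiv (i, r)

lemma emb_val (i : Fin 2) (r : Fin b) : (emb i r).val = r.val + b * i.val := rfl

lemma emb_lt_emb_same {i : Fin 2} {r s : Fin b} : emb i r < emb i s ↔ r < s := by
  rw [Fin.lt_def, Fin.lt_def, emb_val, emb_val]
  exact Nat.add_lt_add_iff_right

lemma emb_zero_lt_emb_one (r s : Fin b) : emb 0 r < emb 1 s := by
  have := r.2
  rw [Fin.lt_def, emb_val, emb_val]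
  simp only [Fin.val_zero, Fin.val_one, Nat.mul_zero, Nat.mul_one, Nat.add_zero]
  omega

lemma not_emb_one_lt_emb_zero (r s : Fin b) : ¬ emb 1 r < emb 0 s := by
  have := s.2
  rw [Fin.lt_def, emb_val, emb_val]
  simp only [Fin.val_zero, Fin.val_one, Nat.mul_zero, Nat.mul_one, Nat.add_zero]
  omega

lemma emb_injective (i : Fin 2) : Function.Injective (emb (b := b) i) := by
  intro r s h
  exact congrArg Prod.snd (finProdFinEquiv.injective h)

lemma kron_apply (c : Equiv.Perm (Fin 2)) (π : Equiv.Perm (Fin b)) (i : Fin 2) (r : Fin b) :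
    permKron c π (emb i r) = emb (c i) (π r) := by
  simp [permKron, emb]

lemma eq_emb (x : Fin (2 * b)) :
    x = emb (finProdFinEquiv.symm x).1 (finProdFinEquiv.symm x).2 :=
  (finProdFinEquiv.apply_symm_apply x).symm

end ButterflyAux
section LISAux

variable {M : ℕ} (σ : Equiv.Perm (Fin M))

lemma bddAbove_inc : BddAbove {k | ∃ t : Finset (Fin M), t.card = k ∧ StrictMonoOn (⇑σ) ↑t} := by
  refine ⟨M, fun k hk => ?_⟩
  obtain ⟨t, ht, -⟩ := hk
  calc k = t.card := ht.symm
    _ ≤ (Finset.univ : Finset (Fin M)).card := Finset.card_le_univ t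
    _ = M := by simp

lemma bddAbove_dec : BddAbove {k | ∃ t : Finset (Fin M), t.card = k ∧ StrictAntiOn (⇑σ) ↑t} := by
  refine ⟨M, fun k hk => ?_⟩
  obtain ⟨t, ht, -⟩ := hk
  calc k = t.card := ht.symm
    _ ≤ (Finset.univ : Finset (Fin M)).card := Finset.card_le_univ t
    _ = M := by simp

lemma card_le_LIS {t : Finset (Fin M)} (h : StrictMonoOn (⇑σ) ↑t) : t.card ≤ LIS σ :=
  le_csSup (bddAbove_inc σ) ⟨t, rfl, h⟩

lemma card_le_LDS {t : Finset (Fin M)} (h : StrictAntiOn (⇑σ) ↑t) : t.card ≤ LDS σ :=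
  le_csSup (bddAbove_dec σ) ⟨t, rfl, h⟩

lemma exists_LIS : ∃ t : Finset (Fin M), t.card = LIS σ ∧ StrictMonoOn (⇑σ) ↑t := by
  have h0 : (0 : ℕ) ∈ {k | ∃ t : Finset (Fin M), t.card = k ∧ StrictMonoOn (⇑σ) ↑t} :=
    ⟨∅, by simp, fun x hx => absurd hx (by simp)⟩
  exact Nat.sSup_mem ⟨0, h0⟩ (bddAbove_inc σ)

lemma exists_LDS : ∃ t : Finset (Fin M), t.card = LDS σ ∧ StrictAntiOn (⇑σ) ↑t := by
  have h0 : (0 : ℕ) ∈ {k | ∃ t : Finset (Fin M), t.card = k ∧ StrictAntiOn (⇑σ) ↑t} :=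
    ⟨∅, by simp, fun x hx => absurd hx (by simp)⟩
  exact Nat.sSup_mem ⟨0, h0⟩ (bddAbove_dec σ)

lemma LIS_eq {v : ℕ} (h1 : ∃ t : Finset (Fin M), t.card = v ∧ StrictMonoOn (⇑σ) ↑t)
    (h2 : ∀ t : Finset (Fin M), StrictMonoOn (⇑σ) ↑t → t.card ≤ v) : LIS σ = v := by
  obtain ⟨t, ht, hm⟩ := h1
  refine le_antisymm (csSup_le ⟨v, t, ht, hm⟩ ?_) (ht ▸ card_le_LIS σ hm)
  rintro k ⟨u, hu, hm'⟩
  exact hu ▸ h2 u hm'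

lemma LDS_eq {v : ℕ} (h1 : ∃ t : Finset (Fin M), t.card = v ∧ StrictAntiOn (⇑σ) ↑t)
    (h2 : ∀ t : Finset (Fin M), StrictAntiOn (⇑σ) ↑t → t.card ≤ v) : LDS σ = v := by
  obtain ⟨t, ht, hm⟩ := h1
  refine le_antisymm (csSup_le ⟨v, t, ht, hm⟩ ?_) (ht ▸ card_le_LDS σ hm)
  rintro k ⟨u, hu, hm'⟩
  exact hu ▸ h2 u hm'

lemma LIS_permCongr {M' : ℕ} (h : M = M') :
    LIS ((finCongr h).permCongr σ) = LIS σ := by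
  subst h
  rw [show (finCongr rfl).permCongr σ = σ from Equiv.ext fun x => by simp]

lemma LDS_permCongr {M' : ℕ} (h : M = M') :
    LDS ((finCongr h).permCongr σ) = LDS σ := by
  subst h
  rw [show (finCongr rfl).permCongr σ = σ from Equiv.ext fun x => by simp]

end LISAux
section KronAux

variable {b : ℕ}

/-- block-`i` bslice of a subset of `Fin (2*b)` -/
def bslice (t' : Finset (Fin (2 * b))) (i : Fin 2) : Finset (Fin b) :=
  (t'.filter (fun x => (finProdFinEquiv.symm x).1 = i)).image
    (fun x => (finProdFinEquiv.symm x).2)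

lemma mem_bslice {t' : Finset (Fin (2 * b))} {i : Fin 2} {r : Fin b} :
    r ∈ bslice t' i ↔ emb i r ∈ t' := by
  constructor
  · intro h
    obtain ⟨x, hx, hr⟩ := Finset.mem_image.mp h
    obtain ⟨hx', hi⟩ := Finset.mem_filter.mp hx
    have hxe : emb i r = x := by rw [← hi, ← hr]; exact (eq_emb x).symm
    rwa [hxe]
  · intro h
    apply Finset.mem_image.mpr
    refine ⟨emb i r, Finset.mem_filter.mpr ⟨h, ?_⟩, ?_⟩
    · simp [emb]
    · simp [emb]

lemma card_bslice (t' : Finset (Fin (2 * b))) (i : Fin 2) :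
    (bslice t' i).card = (t'.filter (fun x => (finProdFinEquiv.symm x).1 = i)).card := by
  apply Finset.card_image_of_injOn
  intro x hx y hy hxy
  have hx' := (Finset.mem_filter.mp hx).2
  have hy' := (Finset.mem_filter.mp hy).2
  apply finProdFinEquiv.symm.injective
  exact Prod.ext (hx'.trans hy'.symm) hxy

lemma card_split (t' : Finset (Fin (2 * b))) :
    t'.card = (bslice t' 0).card + (bslice t' 1).card := by
  rw [card_bslice, card_bslice]
  rw [← Finset.card_filter_add_card_filter_not
    (p := fun x => (finProdFinEquiv.symm x).1 = 0)]
  congr 2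
  apply Finset.filter_congr
  intro x _
  have h2 : ∀ j : Fin 2, (¬ j = 0) ↔ j = 1 := by decide
  exact h2 _

lemma bslice_strictMonoOn {c : Equiv.Perm (Fin 2)} {π : Equiv.Perm (Fin b)}
    {t' : Finset (Fin (2 * b))}
    (hm : StrictMonoOn (⇑(permKron c π)) ↑t') (i : Fin 2) :
    StrictMonoOn (⇑π) ↑(bslice t' i) := by
  intro r hr s hs hrs
  have hr' : emb i r ∈ t' := mem_bslice.mp (Finset.mem_coe.mp hr)
  have hs' : emb i s ∈ t' := mem_bslice.mp (Finset.mem_coe.mp hs)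
  have h := hm (Finset.mem_coe.mpr hr') (Finset.mem_coe.mpr hs') (emb_lt_emb_same.mpr hrs)
  rw [kron_apply, kron_apply] at h
  exact emb_lt_emb_same.mp h

lemma bslice_strictAntiOn {c : Equiv.Perm (Fin 2)} {π : Equiv.Perm (Fin b)}
    {t' : Finset (Fin (2 * b))}
    (hm : StrictAntiOn (⇑(permKron c π)) ↑t') (i : Fin 2) :
    StrictAntiOn (⇑π) ↑(bslice t' i) := by
  intro r hr s hs hrs
  have hr' : emb i r ∈ t' := mem_bslice.mp (Finset.mem_coe.mp hr)
  have hs' : emb i s ∈ t' := mem_bslice.mp (Finset.mem_coe.mp hs)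
  have h := hm (Finset.mem_coe.mpr hr') (Finset.mem_coe.mpr hs') (emb_lt_emb_same.mpr hrs)
  rw [kron_apply, kron_apply] at h
  exact emb_lt_emb_same.mp h

lemma kron_one_apply (π : Equiv.Perm (Fin b)) (i : Fin 2) (r : Fin b) :
    permKron (1 : Equiv.Perm (Fin 2)) π (emb i r) = emb i (π r) := by
  rw [kron_apply]; rfl

lemma rot_zero : (finRotate 2) 0 = 1 := by decide
lemma rot_one : (finRotate 2) 1 = 0 := by decide

lemma kron_rot_apply₀ (π : Equiv.Perm (Fin b)) (r : Fin b) :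
    permKron (finRotate 2) π (emb 0 r) = emb 1 (π r) := by
  rw [kron_apply, rot_zero]

lemma kron_rot_apply₁ (π : Equiv.Perm (Fin b)) (r : Fin b) :
    permKron (finRotate 2) π (emb 1 r) = emb 0 (π r) := by
  rw [kron_apply, rot_one]

lemma double_card (t : Finset (Fin b)) :
    (t.image (emb 0) ∪ t.image (emb 1)).card = 2 * t.card := by
  have hd : Disjoint (t.image (emb 0)) (t.image (emb 1)) := by
    rw [Finset.disjoint_left]
    rintro x hx0 hx1
    obtain ⟨r, _, rfl⟩ := Finset.mem_image.mp hx0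
    obtain ⟨s, _, heq⟩ := Finset.mem_image.mp hx1
    exact (ne_of_lt (emb_zero_lt_emb_one r s)) heq.symm
  rw [Finset.card_union_of_disjoint hd,
    Finset.card_image_of_injective _ (emb_injective 0),
    Finset.card_image_of_injective _ (emb_injective 1)]
  ring

lemma mem_double {t : Finset (Fin b)} {x : Fin (2 * b)}
    (hx : x ∈ t.image (emb 0) ∪ t.image (emb 1)) :
    (∃ r, r ∈ t ∧ x = emb 0 r) ∨ (∃ r, r ∈ t ∧ x = emb 1 r) := by
  rw [Finset.mem_union] at hx
  rcases hx with hx | hx <;> obtain ⟨r, hr, rfl⟩ := Finset.mem_image.mp hx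
  · exact Or.inl ⟨r, hr, rfl⟩
  · exact Or.inr ⟨r, hr, rfl⟩

lemma LIS_kron_one (π : Equiv.Perm (Fin b)) :
    LIS (permKron (1 : Equiv.Perm (Fin 2)) π) = 2 * LIS π := by
  obtain ⟨t, ht, hm⟩ := exists_LIS π
  apply LIS_eq
  · refine ⟨t.image (emb 0) ∪ t.image (emb 1), by rw [double_card, ht], ?_⟩
    intro x hx y hy hxy
    rcases mem_double (Finset.mem_coe.mp hx) with ⟨r, hr, rfl⟩ | ⟨r, hr, rfl⟩ <;>
      rcases mem_double (Finset.mem_coe.mp hy) with ⟨s, hs, rfl⟩ | ⟨s, hs, rfl⟩ <;>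
      rw [kron_one_apply, kron_one_apply]
    · exact emb_lt_emb_same.mpr (hm (Finset.mem_coe.mpr hr) (Finset.mem_coe.mpr hs)
        (emb_lt_emb_same.mp hxy))
    · exact emb_zero_lt_emb_one _ _
    · exact absurd hxy (not_emb_one_lt_emb_zero r s)
    · exact emb_lt_emb_same.mpr (hm (Finset.mem_coe.mpr hr) (Finset.mem_coe.mpr hs)
        (emb_lt_emb_same.mp hxy))
  · intro t' hm'
    rw [card_split t']
    have h0 := card_le_LIS π (bslice_strictMonoOn hm' 0)
    have h1 := card_le_LIS π (bslice_strictMonoOn hm' 1)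
    omega

lemma LDS_kron_rot (π : Equiv.Perm (Fin b)) :
    LDS (permKron (finRotate 2) π) = 2 * LDS π := by
  obtain ⟨t, ht, hm⟩ := exists_LDS π
  apply LDS_eq
  · refine ⟨t.image (emb 0) ∪ t.image (emb 1), by rw [double_card, ht], ?_⟩
    intro x hx y hy hxy
    rcases mem_double (Finset.mem_coe.mp hx) with ⟨r, hr, rfl⟩ | ⟨r, hr, rfl⟩ <;>
      rcases mem_double (Finset.mem_coe.mp hy) with ⟨s, hs, rfl⟩ | ⟨s, hs, rfl⟩
    · rw [kron_rot_apply₀, kron_rot_apply₀]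
      exact emb_lt_emb_same.mpr (hm (Finset.mem_coe.mpr hr) (Finset.mem_coe.mpr hs)
        (emb_lt_emb_same.mp hxy))
    · rw [kron_rot_apply₁, kron_rot_apply₀]
      exact emb_zero_lt_emb_one _ _
    · exact absurd hxy (not_emb_one_lt_emb_zero r s)
    · rw [kron_rot_apply₁, kron_rot_apply₁]
      exact emb_lt_emb_same.mpr (hm (Finset.mem_coe.mpr hr) (Finset.mem_coe.mpr hs)
        (emb_lt_emb_same.mp hxy))
  · intro t' hm'
    rw [card_split t']
    have h0 := card_le_LDS π (bslice_strictAntiOn hm' 0)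
    have h1 := card_le_LDS π (bslice_strictAntiOn hm' 1)
    omega

lemma LDS_kron_one (π : Equiv.Perm (Fin b)) :
    LDS (permKron (1 : Equiv.Perm (Fin 2)) π) = LDS π := by
  obtain ⟨t, ht, hm⟩ := exists_LDS π
  apply LDS_eq
  · refine ⟨t.image (emb 0), by rw [Finset.card_image_of_injective _ (emb_injective 0), ht], ?_⟩
    intro x hx y hy hxy
    obtain ⟨r, hr, rfl⟩ := Finset.mem_image.mp (Finset.mem_coe.mp hx)
    obtain ⟨s, hs, rfl⟩ := Finset.mem_image.mp (Finset.mem_coe.mp hy)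
    rw [kron_one_apply, kron_one_apply]
    exact emb_lt_emb_same.mpr (hm (Finset.mem_coe.mpr hr) (Finset.mem_coe.mpr hs)
      (emb_lt_emb_same.mp hxy))
  · intro t' hm'
    -- one of the two bslices is empty
    by_cases h1 : bslice t' 1 = ∅
    · rw [card_split t', h1]
      simpa using card_le_LDS π (bslice_strictAntiOn hm' 0)
    · have h0 : bslice t' 0 = ∅ := by
        rw [Finset.eq_empty_iff_forall_notMem]
        intro r hr
        obtain ⟨s, hs⟩ := Finset.nonempty_iff_ne_empty.mpr h1
        have hr' := mem_bslice.mp hr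
        have hs' := mem_bslice.mp hs
        have h := hm' (Finset.mem_coe.mpr hr') (Finset.mem_coe.mpr hs')
          (emb_zero_lt_emb_one r s)
        rw [kron_one_apply, kron_one_apply] at h
        exact absurd h (not_lt_of_gt (emb_zero_lt_emb_one _ _))
      rw [card_split t', h0]
      simpa using card_le_LDS π (bslice_strictAntiOn hm' 1)

lemma LIS_kron_rot (π : Equiv.Perm (Fin b)) :
    LIS (permKron (finRotate 2) π) = LIS π := by
  obtain ⟨t, ht, hm⟩ := exists_LIS π
  apply LIS_eq
  · refine ⟨t.image (emb 0), by rw [Finset.card_image_of_injective _ (emb_injective 0), ht], ?_⟩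
    intro x hx y hy hxy
    obtain ⟨r, hr, rfl⟩ := Finset.mem_image.mp (Finset.mem_coe.mp hx)
    obtain ⟨s, hs, rfl⟩ := Finset.mem_image.mp (Finset.mem_coe.mp hy)
    rw [kron_rot_apply₀, kron_rot_apply₀]
    exact emb_lt_emb_same.mpr (hm (Finset.mem_coe.mpr hr) (Finset.mem_coe.mpr hs)
      (emb_lt_emb_same.mp hxy))
  · intro t' hm'
    by_cases h1 : bslice t' 1 = ∅
    · rw [card_split t', h1]
      simpa using card_le_LIS π (bslice_strictMonoOn hm' 0)
    · have h0 : bslice t' 0 = ∅ := by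
        rw [Finset.eq_empty_iff_forall_notMem]
        intro r hr
        obtain ⟨s, hs⟩ := Finset.nonempty_iff_ne_empty.mpr h1
        have hr' := mem_bslice.mp hr
        have hs' := mem_bslice.mp hs
        have h := hm' (Finset.mem_coe.mpr hr') (Finset.mem_coe.mpr hs')
          (emb_zero_lt_emb_one r s)
        rw [kron_rot_apply₀, kron_rot_apply₁] at h
        exact absurd h (not_emb_one_lt_emb_zero _ _)
      rw [card_split t', h0]
      simpa using card_le_LIS π (bslice_strictMonoOn hm' 1)

lemma finRotate_two_zpow (a : ℤ) :
    finRotate 2 ^ a = 1 ∨ finRotate 2 ^ a = finRotate 2 := by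
  have h2 : finRotate 2 ^ (2 : ℤ) = 1 := by
    rw [show (2 : ℤ) = ((2 : ℕ) : ℤ) from rfl, zpow_natCast]
    decide
  have key : finRotate 2 ^ a = finRotate 2 ^ (a % 2) := by
    conv_lhs => rw [← Int.emod_add_mul_ediv a 2]
    rw [zpow_add, zpow_mul, h2, one_zpow, mul_one]
  rcases Int.emod_two_eq a with h | h
  · left; rw [key, h, zpow_zero]
  · right; rw [key, h, zpow_one]

end KronAux
/-- For every simple binary butterfly permutation, the product of the lengths of the
longest increasing and longest decreasing subsequences equals `2^n`. -/
theorem simpleButterfly_LIS_mul_LDS (n : ℕ) (σ : Equiv.Perm (Fin (2 ^ n)))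
    (hσ : σ ∈ simpleButterfly 2 n) : LIS σ * LDS σ = 2 ^ n := by
  induction n with
  | zero =>
    have hσ' : σ = 1 := hσ
    subst hσ'
    have hcard : ∀ t : Finset (Fin (2 ^ 0)), t.card ≤ 1 :=
      fun t => (Finset.card_le_univ t).trans (by simp)
    have hsing : ∀ (f : Fin (2 ^ 0) → Fin (2 ^ 0)) (x y : Fin (2 ^ 0)),
        x ∈ ({(⟨0, by norm_num⟩ : Fin (2 ^ 0))} : Finset (Fin (2 ^ 0))) →
        y ∈ ({(⟨0, by norm_num⟩ : Fin (2 ^ 0))} : Finset (Fin (2 ^ 0))) → ¬ x < y := by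
      intro f x y hx hy hxy
      rw [Finset.mem_singleton] at hx hy
      subst hx; subst hy; exact lt_irrefl _ hxy
    have h1 : LIS (1 : Equiv.Perm (Fin (2 ^ 0))) = 1 := by
      apply LIS_eq
      · exact ⟨{⟨0, by norm_num⟩}, by simp,
          fun x hx y hy hxy => absurd hxy (hsing id x y (Finset.mem_coe.mp hx) (Finset.mem_coe.mp hy))⟩
      · exact fun t _ => hcard t
    have h2 : LDS (1 : Equiv.Perm (Fin (2 ^ 0))) = 1 := by
      apply LDS_eq
      · exact ⟨{⟨0, by norm_num⟩}, by simp,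
          fun x hx y hy hxy => absurd hxy (hsing id x y (Finset.mem_coe.mp hx) (Finset.mem_coe.mp hy))⟩
      · exact fun t _ => hcard t
    rw [h1, h2]
    norm_num
  | succ n ih =>
    obtain ⟨a, π, hπ, rfl⟩ := hσ
    rw [LIS_permCongr, LDS_permCongr]
    rcases finRotate_two_zpow a with h | h <;> rw [h]
    · rw [LIS_kron_one, LDS_kron_one, mul_assoc, ih π hπ]
      exact (pow_succ' 2 n).symm
    · rw [LIS_kron_rot, LDS_kron_rot, mul_left_comm, ih π hπ]
      exact (pow_succ' 2 n).symm
end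

section
/- For each integer m ≥ 2 define α_m = ln((3m² + (m mod 2))/(4m)) / ln m. Then the sequence (α_m)_{m ≥ 2} is nondecreasing: α_m ≤ α_{m+1} for all m ≥ 2. -/
/-!
Write `c = log (4/3)`. Then `α_m = 1 - (c - log (1 + 1/(3m²))) / log m` for odd `m` and
`α_m = 1 - c / log m` for even `m`. So `α_m ≥ 1 - c / log m` always, with equality for even `m`,
and `1 - c / log m` increases; this settles the step from an even `m`. From an odd `m`, the
correction `log (1 + 1/(3m²)) ≤ 1/(3m²)` is outweighed by `c (log (m+1) - log m) ≥ c/(m+1)`,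
because `log (m+1) ≤ (m+1)/e`.
-/

/-- `α_m = ln((3m² + (m mod 2))/(4m)) / ln m`, the exponent with
`m^{α_m} = (3m² + (m mod 2))/(4m)`. -/
noncomputable def alphaExp (m : ℕ) : ℝ :=
  Real.log ((3 * (m : ℝ) ^ 2 + ((m % 2 : ℕ) : ℝ)) / (4 * (m : ℝ))) / Real.log m

open Real

lemma log_le_div_exp_one {x : ℝ} (hx : 0 < x) : log x ≤ x / exp 1 := by
  have h := log_le_sub_one_of_pos (div_pos hx (exp_pos 1))
  rw [log_div hx.ne' (exp_pos 1).ne', log_exp] at h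
  linarith

lemma add_one_mul_log_add_one_le {x : ℝ} (hx : 3 ≤ x) : (x + 1) * log (x + 1) ≤ 3 * x ^ 2 / 4 := by
  have hexp : (2.7 : ℝ) < exp 1 := by linarith [exp_one_gt_d9]
  have hlog : log (x + 1) ≤ (x + 1) / 2.7 :=
    (log_le_div_exp_one (by linarith)).trans
      (div_le_div_of_nonneg_left (by linarith) (by norm_num) hexp.le)
  calc (x + 1) * log (x + 1) ≤ (x + 1) * ((x + 1) / 2.7) := by gcongr
    _ ≤ 3 * x ^ 2 / 4 := by
        rw [mul_div_assoc', div_le_div_iff₀ (by norm_num) (by norm_num)]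
        nlinarith

lemma log_one_add_inv_mul_log_le {x : ℝ} (hx : 3 ≤ x) :
    log (1 + 1 / (3 * x ^ 2)) * log (x + 1) ≤ log (4 / 3) * (log (x + 1) - log x) := by
  have hx0 : 0 < x := by linarith
  have hL : 0 ≤ log (x + 1) := log_nonneg (by linarith)
  have hc : 1 / 4 ≤ log (4 / 3) := by
    have := one_sub_inv_le_log_of_pos (show (0 : ℝ) < 4 / 3 by norm_num)
    norm_num at this ⊢; linarith
  have hgap : 1 / (x + 1) ≤ log (x + 1) - log x := by
    have := one_sub_inv_le_log_of_pos (show 0 < (x + 1) / x by positivity)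
    rw [log_div (by linarith) hx0.ne', inv_div] at this
    calc 1 / (x + 1) = 1 - x / (x + 1) := by field_simp; ring
      _ ≤ _ := this
  calc log (1 + 1 / (3 * x ^ 2)) * log (x + 1) ≤ 1 / (3 * x ^ 2) * log (x + 1) := by
        gcongr; linarith [log_le_sub_one_of_pos (show 0 < 1 + 1 / (3 * x ^ 2) by positivity)]
    _ ≤ 1 / 4 * (1 / (x + 1)) := by
        rw [div_mul_eq_mul_div, one_mul, div_le_iff₀ (by positivity)]
        have := add_one_mul_log_add_one_le hx
        field_simp
        linarith
    _ ≤ log (4 / 3) * (log (x + 1) - log x) := by gcongr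

lemma alphaExp_eq {m : ℕ} (hm : 2 ≤ m) :
    alphaExp m = 1 - (log (4 / 3) - log (1 + (m % 2 : ℕ) / (3 * (m : ℝ) ^ 2))) / log m := by
  have hx : (0 : ℝ) < m := by positivity
  have hL : log m ≠ 0 := (log_pos (by exact_mod_cast hm)).ne'
  have harg : (3 * (m : ℝ) ^ 2 + (m % 2 : ℕ)) / (4 * m)
      = m * (1 + (m % 2 : ℕ) / (3 * (m : ℝ) ^ 2)) / (4 / 3) := by
    field_simp
  rw [alphaExp, harg, log_div (by positivity) (by norm_num), log_mul hx.ne' (by positivity)]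
  field_simp
  ring

/-- The sequence `(α_m)_{m ≥ 2}` is nondecreasing. -/
theorem alphaExp_monotone (m : ℕ) (hm : 2 ≤ m) : alphaExp m ≤ alphaExp (m + 1) := by
  have hL1 : 0 < log m := log_pos (by exact_mod_cast hm)
  have hL2 : 0 < log (m + 1 : ℝ) := log_pos (by norm_cast; omega)
  have hc : 0 ≤ log (4 / 3 : ℝ) := log_nonneg (by norm_num)
  rw [alphaExp_eq hm, alphaExp_eq (by omega), sub_le_sub_iff_left]
  rcases Nat.even_or_odd m with he | ho
  · have hm2 := Nat.even_iff.mp he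
    rw [hm2, (by omega : (m + 1) % 2 = 1)]
    push_cast
    have ht : 0 ≤ log (1 + 1 / (3 * ((m : ℝ) + 1) ^ 2)) :=
      log_nonneg (le_add_of_nonneg_right (by positivity))
    simp only [zero_div, add_zero, log_one, sub_zero]
    calc _ ≤ log (4 / 3) / log (m + 1 : ℝ) := by gcongr; linarith
      _ ≤ log (4 / 3) / log m := by gcongr; linarith
  · have hm2 := Nat.odd_iff.mp ho
    rw [hm2, (by omega : (m + 1) % 2 = 0)]
    push_cast
    have key := log_one_add_inv_mul_log_le (x := m) (by exact_mod_cast (by omega : 3 ≤ m))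
    simp only [zero_div, add_zero, log_one, sub_zero]
    rw [div_le_div_iff₀ hL2 hL1]
    linarith
end
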